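/- arXiv:1002.2005 — 3 statements merged into one kernel-verified Lean document; each statement's English description precedes it below -/
import Mathlib

section
/- Let k be a field of characteristic zero and ∂ a derivation on k. Let g, h be invertible n×n matrices over k such that every entry of h and every entry of g⁻¹·h·g is a constant of ∂ (i.e., is annihilated by ∂). Then the matrix ∂(g)·g⁻¹ commutes with h, that is, ∂(g)·g⁻¹·h = h·∂(g)·g⁻¹, where ∂(g) denotes the matrix obtained by applying ∂ to each entry of g. -/
/-!
Conjugating the constant matrix `h` by `g` gives the constant matrix `c = g⁻¹ h g`, so
`h g = g c`. Differentiating this identity with the Leibniz rule kills `∂h` and `∂c`, leaving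
`h ∂g = ∂g c`, and multiplying on the right by `g⁻¹` (using `c g⁻¹ = g⁻¹ h`) gives the claim.
-/

open Matrix

theorem Matrix.map_mul_of_leibniz {l m n R : Type*} [Fintype m] [Ring R] (δ : R → R)
    (hadd : ∀ a b : R, δ (a + b) = δ a + δ b)
    (hmul : ∀ a b : R, δ (a * b) = δ a * b + a * δ b)
    (A : Matrix l m R) (B : Matrix m n R) :
    (A * B).map δ = A.map δ * B + A * B.map δ := by
  ext i j
  simp only [map_apply, mul_apply, add_apply, ← Finset.sum_add_distrib, ← hmul]
  exact map_sum (AddMonoidHom.mk' δ hadd) _ _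

theorem Units.leibniz_mul_inv_commute {A : Type*} [Semiring A] (D : A → A)
    (hmul : ∀ a b : A, D (a * b) = D a * b + a * D b) (u : Aˣ) {h : A}
    (hh : D h = 0) (hconj : D (↑u⁻¹ * h * u) = 0) :
    D u * ↑u⁻¹ * h = h * (D u * ↑u⁻¹) := by
  set c : A := ↑u⁻¹ * h * u
  have hu : h * u = u * c := by simp [c, ← mul_assoc]
  have hD : h * D u = D u * c := by
    simpa [hmul, hh, hconj] using congrArg D hu
  have hc : c * ↑u⁻¹ = ↑u⁻¹ * h := by simp [c, mul_assoc]
  calc D u * ↑u⁻¹ * h = D u * c * ↑u⁻¹ := by rw [mul_assoc, mul_assoc, hc]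
    _ = h * (D u * ↑u⁻¹) := by rw [← hD, mul_assoc]

theorem deriv_conj_const_commutes_general {n : ℕ} {k : Type*} [Field k]
    (δ : k → k)
    (hadd : ∀ a b : k, δ (a + b) = δ a + δ b)
    (hmul : ∀ a b : k, δ (a * b) = δ a * b + a * δ b)
    (g h : GL (Fin n) k)
    (hh : ∀ i j, δ ((h : Matrix (Fin n) (Fin n) k) i j) = 0)
    (hconj : ∀ i j, δ (((g⁻¹ * h * g : GL (Fin n) k) : Matrix (Fin n) (Fin n) k) i j) = 0) :
    ((g : Matrix (Fin n) (Fin n) k).map δ * (g⁻¹ : GL (Fin n) k)) * (h : Matrix (Fin n) (Fin n) k)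
      = (h : Matrix (Fin n) (Fin n) k) *
        ((g : Matrix (Fin n) (Fin n) k).map δ * (g⁻¹ : GL (Fin n) k)) := by
  have hD : ∀ A B : Matrix (Fin n) (Fin n) k, (A * B).map δ = A.map δ * B + A * B.map δ :=
    map_mul_of_leibniz δ hadd hmul
  have h_const : (h : Matrix (Fin n) (Fin n) k).map δ = 0 := ext hh
  have hconj_const : ((g⁻¹ : GL (Fin n) k) * (h : Matrix (Fin n) (Fin n) k) * g).map δ = 0 :=
    ext fun i j ↦ by simpa only [Units.val_mul, map_apply, Matrix.zero_apply] using hconj i j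
  exact Units.leibniz_mul_inv_commute (fun M : Matrix (Fin n) (Fin n) k ↦ M.map δ) hD g
    h_const hconj_const

/-- Key computational step in the proof of Lemma 7.2 of
"Projective Isomonodromy and Galois Groups" (Mitschi–Singer): if `h` and
`g⁻¹·h·g` both have all entries annihilated by a derivation `δ` of `k`, then
`δ(g)·g⁻¹` commutes with `h`. -/
theorem deriv_conj_const_commutes {n : ℕ} {k : Type*} [Field k] [CharZero k]
    (δ : k → k)
    (hadd : ∀ a b : k, δ (a + b) = δ a + δ b)
    (hmul : ∀ a b : k, δ (a * b) = δ a * b + a * δ b)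
    (g h : GL (Fin n) k)
    (hh : ∀ i j, δ ((h : Matrix (Fin n) (Fin n) k) i j) = 0)
    (hconj : ∀ i j, δ (((g⁻¹ * h * g : GL (Fin n) k) : Matrix (Fin n) (Fin n) k) i j) = 0) :
    ((g : Matrix (Fin n) (Fin n) k).map δ * (g⁻¹ : GL (Fin n) k)) * (h : Matrix (Fin n) (Fin n) k)
      = (h : Matrix (Fin n) (Fin n) k) *
        ((g : Matrix (Fin n) (Fin n) k).map δ * (g⁻¹ : GL (Fin n) k)) :=
  deriv_conj_const_commutes_general δ hadd hmul g h hh hconj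
end

section
/- Let k be a field of characteristic zero, let ∂₁, …, ∂_r be pairwise commuting derivations on k, and let C = {x ∈ k : ∂ᵢ(x) = 0 for all i} be the field of common constants. Let H be a subgroup of GL_n(k) all of whose elements have all their entries in C, and assume H is irreducible in the strong sense that every n×n matrix over k commuting with all elements of H is a scalar multiple of the identity. Assume moreover that k has the following solvability property: for all z₁, …, z_r ∈ k satisfying ∂ᵢ(z_j) = ∂_j(zᵢ) for all i, j, there exists a nonzero u ∈ k with ∂ᵢ(u) = zᵢ·u for all i. If g ∈ GL_n(k) normalizes H (i.e., g⁻¹·h·g ∈ H and g·h·g⁻¹ ∈ H for all h ∈ H), then there exist a nonzero scalar u ∈ k and a matrix h₀ ∈ GL_n(k) with all entries in C such that g = u·h₀. -/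
/-!
Let `Lᵢ = ∂ᵢ(g) g⁻¹` be the logarithmic derivatives of `g`. Differentiating `h' = g h g⁻¹`, where
`h = g⁻¹ h' g` and `h'` both lie in the constant group `H`, gives `[Lᵢ, h'] = 0`; by irreducibility
`Lᵢ = zᵢ`, a scalar, i.e. `∂ᵢ g = zᵢ g`. Comparing `∂ᵢ ∂ⱼ` with `∂ⱼ ∂ᵢ` on a nonzero entry of `g`
gives the integrability condition `∂ᵢ zⱼ = ∂ⱼ zᵢ`, so there is `u ≠ 0` with `∂ᵢ u = zᵢ u`, and then
`u⁻¹ g` has constant entries.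
-/

namespace Derivation

def ofLeibniz {A : Type*} [CommRing A] (d : A → A) (hadd : ∀ a b, d (a + b) = d a + d b)
    (hmul : ∀ a b, d (a * b) = d a * b + a * d b) : Derivation ℤ A A :=
  mk' (AddMonoidHom.mk' d hadd).toIntLinearMap fun a b => by
    simp only [AddMonoidHom.coe_toIntLinearMap, AddMonoidHom.mk'_apply, hmul, smul_eq_mul]
    ring

variable {R A : Type*} [CommRing R] [CommRing A] [Algebra R A]

theorem map_eq_map_of_map_eq_mul [IsDomain A] (D₁ D₂ : Derivation R A A)
    (hcomm : ∀ y, D₁ (D₂ y) = D₂ (D₁ y)) {x a b : A} (hx : x ≠ 0) (h₁ : D₁ x = a * x)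
    (h₂ : D₂ x = b * x) : D₁ b = D₂ a := by
  have h := hcomm x
  rw [h₁, h₂, leibniz, leibniz, h₁, h₂, smul_eq_mul, smul_eq_mul, smul_eq_mul, smul_eq_mul] at h
  exact mul_right_cancel₀ hx (by linear_combination h)

theorem map_inv_mul_eq_zero {K : Type*} [Field K] [Algebra R K] (D : Derivation R K K)
    {u x z : K} (hu : D u = z * u) (hx : D x = z * x) : D (u⁻¹ * x) = 0 := by
  rcases eq_or_ne u 0 with rfl | hu₀
  · simp
  rw [leibniz, leibniz_inv, hu, hx, smul_eq_mul, smul_eq_mul, smul_eq_mul]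
  field_simp
  ring

section Matrix

variable (D : Derivation R A A) {n : Type*}

theorem matrix_map_mul {l m : Type*} [Fintype m] (M : Matrix l m A) (N : Matrix m n A) :
    (M * N).map D = M.map D * N + M * N.map D := by
  ext i j
  simp only [Matrix.map_apply, Matrix.mul_apply, Matrix.add_apply, map_sum, leibniz, smul_eq_mul,
    ← Finset.sum_add_distrib]
  exact Finset.sum_congr rfl fun _ _ => by ring

variable [DecidableEq n]

theorem matrix_map_one : (1 : Matrix n n A).map D = 0 := by
  ext i j
  rw [Matrix.map_apply, Matrix.one_apply]
  split_ifs <;> simp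

variable [Fintype n]

def matrixLogDeriv (g : (Matrix n n A)ˣ) : Matrix n n A := (g : Matrix n n A).map D * g⁻¹

theorem matrix_map_units_inv (g : (Matrix n n A)ˣ) :
    (↑g⁻¹ : Matrix n n A).map D = -(g⁻¹ * D.matrixLogDeriv g) := by
  have h := D.matrix_map_mul (g : Matrix n n A) (↑g⁻¹ : Matrix n n A)
  rw [g.mul_inv, D.matrix_map_one] at h
  calc (↑g⁻¹ : Matrix n n A).map D
      = g⁻¹ * (g * (↑g⁻¹ : Matrix n n A).map D) := by rw [← mul_assoc, g.inv_mul, one_mul]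
    _ = _ := by rw [eq_neg_of_add_eq_zero_right h.symm, matrixLogDeriv]; noncomm_ring

theorem matrix_map_conj (g : (Matrix n n A)ˣ) (h : Matrix n n A) :
    (g * h * g⁻¹ : Matrix n n A).map D =
      D.matrixLogDeriv g * (g * h * g⁻¹) - (g * h * g⁻¹) * D.matrixLogDeriv g
        + g * h.map D * g⁻¹ := by
  rw [D.matrix_map_mul, D.matrix_map_mul, D.matrix_map_units_inv, matrixLogDeriv]
  simp only [mul_assoc, Units.inv_mul_cancel_left]
  noncomm_ring

theorem commute_matrixLogDeriv_conj (g : (Matrix n n A)ˣ) {h : Matrix n n A}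
    (hh : h.map D = 0) (hconj : (g * h * g⁻¹ : Matrix n n A).map D = 0) :
    Commute (D.matrixLogDeriv g) (g * h * g⁻¹) := by
  rw [D.matrix_map_conj, hh, mul_zero, zero_mul, add_zero, sub_eq_zero] at hconj
  exact hconj

theorem exists_matrixLogDeriv_eq_smul_one {H : Subgroup (Matrix n n A)ˣ}
    (hconst : ∀ h ∈ H, (h : Matrix n n A).map D = 0)
    (hirr : ∀ M : Matrix n n A, (∀ h ∈ H, M * h = h * M) → ∃ c : A, M = c • 1)
    {g : (Matrix n n A)ˣ} (hg : ∀ h ∈ H, g⁻¹ * h * g ∈ H) :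
    ∃ c : A, D.matrixLogDeriv g = c • 1 := by
  refine hirr _ fun h hh => ?_
  have hconj : (g * (g⁻¹ * h * g : (Matrix n n A)ˣ) * g⁻¹ : Matrix n n A) = h := by
    simp [mul_assoc]
  rw [← hconj]
  exact D.commute_matrixLogDeriv_conj g (hconst _ (hg h hh)) (hconj ▸ hconst h hh)

theorem matrix_map_eq_smul_of_matrixLogDeriv_eq {g : (Matrix n n A)ˣ} {c : A}
    (hc : D.matrixLogDeriv g = c • 1) : (g : Matrix n n A).map D = c • (g : Matrix n n A) := by
  rw [← smul_one_mul c (g : Matrix n n A), ← hc, matrixLogDeriv, mul_assoc, Units.inv_mul, mul_one]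

end Matrix

end Derivation

theorem Matrix.exists_units_apply_ne_zero {n A : Type*} [Fintype n] [DecidableEq n] [Nonempty n]
    [CommRing A] [Nontrivial A] (g : (Matrix n n A)ˣ) : ∃ i j, (g : Matrix n n A) i j ≠ 0 := by
  by_contra! h
  exact g.ne_zero (Matrix.ext h)

theorem normalizer_of_irreducible_constant_group_general {n r : ℕ}
    {k : Type*} [Field k]
    (δ : Fin r → k → k)
    (hadd : ∀ i, ∀ a b : k, δ i (a + b) = δ i a + δ i b)
    (hmul : ∀ i, ∀ a b : k, δ i (a * b) = δ i a * b + a * δ i b)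
    (hcomm : ∀ i j, ∀ a : k, δ i (δ j a) = δ j (δ i a))
    (H : Subgroup (GL (Fin n) k))
    (hHconst : ∀ h ∈ H, ∀ a b, ∀ i, δ i ((h : Matrix (Fin n) (Fin n) k) a b) = 0)
    (hHirr : ∀ M : Matrix (Fin n) (Fin n) k,
      (∀ h ∈ H, M * (h : Matrix (Fin n) (Fin n) k) = (h : Matrix (Fin n) (Fin n) k) * M) →
        ∃ c : k, M = c • (1 : Matrix (Fin n) (Fin n) k))
    (hsolv : ∀ z : Fin r → k, (∀ i j, δ i (z j) = δ j (z i)) →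
        ∃ u : k, u ≠ 0 ∧ ∀ i, δ i u = z i * u)
    (g : GL (Fin n) k)
    (hnorm : ∀ h ∈ H, g⁻¹ * h * g ∈ H ∧ g * h * g⁻¹ ∈ H) :
    ∃ u : k, u ≠ 0 ∧ ∃ h₀ : GL (Fin n) k,
      (∀ a b, ∀ i, δ i ((h₀ : Matrix (Fin n) (Fin n) k) a b) = 0) ∧
        (g : Matrix (Fin n) (Fin n) k) = u • (h₀ : Matrix (Fin n) (Fin n) k) := by
  rcases isEmpty_or_nonempty (Fin n) with _ | _
  · exact ⟨1, one_ne_zero, g, fun a => isEmptyElim a, (one_smul _ _).symm⟩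
  let D i := Derivation.ofLeibniz (δ i) (hadd i) (hmul i)
  have hlog i : ∃ z : k, (D i).matrixLogDeriv g = z • 1 :=
    (D i).exists_matrixLogDeriv_eq_smul_one (fun h hh => Matrix.ext (hHconst h hh · · i)) hHirr
      fun h hh => (hnorm h hh).1
  choose z hz using hlog
  have hgz i a b : δ i (g a b) = z i * g a b :=
    congr_fun₂ ((D i).matrix_map_eq_smul_of_matrixLogDeriv_eq (hz i)) a b
  obtain ⟨a, b, hab⟩ := Matrix.exists_units_apply_ne_zero g
  obtain ⟨u, hu, hδu⟩ := hsolv z fun i j =>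
    Derivation.map_eq_map_of_map_eq_mul (D i) (D j) (hcomm i j) hab (hgz i a b) (hgz j a b)
  refine ⟨u, hu, (Units.mk0 u hu)⁻¹ • g, fun a b i => ?_, ?_⟩
  · exact (D i).map_inv_mul_eq_zero (hδu i) (hgz i a b)
  · change (g : Matrix (Fin n) (Fin n) k) = u • u⁻¹ • (g : Matrix (Fin n) (Fin n) k)
    rw [smul_smul, mul_inv_cancel₀ hu, one_smul]

/-- Abstract form of Lemma 7.2 of "Projective Isomonodromy and Galois Groups"
(Mitschi–Singer): if `H ⊆ GL_n(k)` has constant entries and is irreducible in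
the sense of Schur, `k` satisfies the integrable-system solvability property,
and `g` normalizes `H`, then `g = u·h₀` with `u` a nonzero scalar and `h₀` a
matrix with constant entries. -/
theorem normalizer_of_irreducible_constant_group {n r : ℕ}
    {k : Type*} [Field k] [CharZero k]
    (δ : Fin r → k → k)
    (hadd : ∀ i, ∀ a b : k, δ i (a + b) = δ i a + δ i b)
    (hmul : ∀ i, ∀ a b : k, δ i (a * b) = δ i a * b + a * δ i b)
    (hcomm : ∀ i j, ∀ a : k, δ i (δ j a) = δ j (δ i a))
    (H : Subgroup (GL (Fin n) k))
    (hHconst : ∀ h ∈ H, ∀ a b, ∀ i, δ i ((h : Matrix (Fin n) (Fin n) k) a b) = 0)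
    (hHirr : ∀ M : Matrix (Fin n) (Fin n) k,
      (∀ h ∈ H, M * (h : Matrix (Fin n) (Fin n) k) = (h : Matrix (Fin n) (Fin n) k) * M) →
        ∃ c : k, M = c • (1 : Matrix (Fin n) (Fin n) k))
    (hsolv : ∀ z : Fin r → k, (∀ i j, δ i (z j) = δ j (z i)) →
        ∃ u : k, u ≠ 0 ∧ ∀ i, δ i u = z i * u)
    (g : GL (Fin n) k)
    (hnorm : ∀ h ∈ H, g⁻¹ * h * g ∈ H ∧ g * h * g⁻¹ ∈ H) :
    ∃ u : k, u ≠ 0 ∧ ∃ h₀ : GL (Fin n) k,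
      (∀ a b, ∀ i, δ i ((h₀ : Matrix (Fin n) (Fin n) k) a b) = 0) ∧
        (g : Matrix (Fin n) (Fin n) k) = u • (h₀ : Matrix (Fin n) (Fin n) k) :=
  normalizer_of_irreducible_constant_group_general δ hadd hmul hcomm H hHconst hHirr hsolv g hnorm
end

section
/- Let k be a field of characteristic zero with a derivation d, let x₁, x₂, x₃ ∈ k be pairwise distinct, and suppose there exists s ∈ k such that d(xᵢ) = xᵢ² + s for i = 1, 2, 3 (so that d(xᵢ) − d(x_j) = xᵢ² − x_j² for all i, j). Let μ ∈ k be a constant of d (d(μ) = 0), set σ = x₁ + x₂ + x₃, and set b₁ = μ/((x₁ − x₂)(x₁ − x₃)). Then d(b₁) = −(x₁ + σ)·μ/((x₁ − x₂)(x₁ − x₃)), i.e., d(b₁) = −α₁·μ where α₁ = (x₁ + σ)/((x₁ − x₂)(x₁ − x₃)). -/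
/-!
The difference of two solutions of `x' = x² + s` satisfies `(xᵢ - xⱼ)' = (xᵢ - xⱼ)(xᵢ + xⱼ)`,
so the logarithmic derivative of `P = (x₁ - x₂)(x₁ - x₃)` is `(x₁ + x₂) + (x₁ + x₃) = x₁ + σ`.
Since `μ` is a constant, `(μ / P)' = -(P' / P) · (μ / P)`.
-/

namespace Derivation

def ofAddLeibniz {A : Type*} [CommRing A] (d : A → A)
    (hadd : ∀ a b : A, d (a + b) = d a + d b)
    (hmul : ∀ a b : A, d (a * b) = d a * b + a * d b) : Derivation ℤ A A :=
  mk' (AddMonoidHom.mk' d hadd).toIntLinearMap fun a b => by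
    simp only [AddMonoidHom.coe_toIntLinearMap, AddMonoidHom.mk'_apply, smul_eq_mul, hmul]
    ring

theorem coe_ofAddLeibniz {A : Type*} [CommRing A] (d : A → A)
    (hadd : ∀ a b : A, d (a + b) = d a + d b)
    (hmul : ∀ a b : A, d (a * b) = d a * b + a * d b) :
    ⇑(ofAddLeibniz d hadd hmul) = d :=
  rfl

theorem map_sub_eq_mul_add_of_eq_sq_add {R A : Type*} [CommRing R] [CommRing A] [Algebra R A]
    (D : Derivation R A A) {a b s : A} (ha : D a = a ^ 2 + s) (hb : D b = b ^ 2 + s) :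
    D (a - b) = (a - b) * (a + b) := by
  rw [D.map_sub, ha, hb]
  ring

theorem leibniz_div_of_map_eq_zero {R K : Type*} [CommRing R] [Field K] [Algebra R K]
    (D : Derivation R K K) {a : K} (ha : D a = 0) (b : K) :
    D (a / b) = -(D b / b) * (a / b) := by
  rcases eq_or_ne b 0 with rfl | hb
  · simp
  rw [leibniz_div, ha, smul_zero, zero_sub, smul_eq_mul, smul_eq_mul]
  field_simp

end Derivation

theorem halphen_b_derivative_general {k : Type*} [Field k]
    (d : k → k)
    (hadd : ∀ a b : k, d (a + b) = d a + d b)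
    (hmul : ∀ a b : k, d (a * b) = d a * b + a * d b)
    (x₁ x₂ x₃ : k) (h12 : x₁ ≠ x₂) (h13 : x₁ ≠ x₃)
    (s : k)
    (hx₁ : d x₁ = x₁ ^ 2 + s) (hx₂ : d x₂ = x₂ ^ 2 + s) (hx₃ : d x₃ = x₃ ^ 2 + s)
    (μ : k) (hμ : d μ = 0)
    (σ : k) (hσ : σ = x₁ + x₂ + x₃)
    (b₁ : k) (hb₁ : b₁ = μ / ((x₁ - x₂) * (x₁ - x₃))) :
    d b₁ = -((x₁ + σ) * μ / ((x₁ - x₂) * (x₁ - x₃))) := by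
  rw [← Derivation.coe_ofAddLeibniz d hadd hmul] at hx₁ hx₂ hx₃ hμ ⊢
  set D := Derivation.ofAddLeibniz d hadd hmul
  have hP : (x₁ - x₂) * (x₁ - x₃) ≠ 0 := mul_ne_zero (sub_ne_zero.2 h12) (sub_ne_zero.2 h13)
  have hDP : D ((x₁ - x₂) * (x₁ - x₃)) = (x₁ + σ) * ((x₁ - x₂) * (x₁ - x₃)) := by
    rw [D.leibniz, D.map_sub_eq_mul_add_of_eq_sq_add hx₁ hx₂,
      D.map_sub_eq_mul_add_of_eq_sq_add hx₁ hx₃, hσ, smul_eq_mul, smul_eq_mul]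
    ring
  rw [hb₁, D.leibniz_div_of_map_eq_zero hμ, hDP, mul_div_cancel_right₀ _ hP, neg_mul, mul_div_assoc]

/-- The "easy computation" `b₁' = −α₁·μ` at the end of Section 5 of
"Projective Isomonodromy and Galois Groups" (Mitschi–Singer): if `x₁, x₂, x₃`
satisfy Halphen's equation `d(xᵢ) = xᵢ² + s` (same `s` for all `i`) and `μ` is a
constant, then `b₁ = μ/((x₁−x₂)(x₁−x₃))` satisfies
`d(b₁) = −(x₁+σ)·μ/((x₁−x₂)(x₁−x₃))` with `σ = x₁+x₂+x₃`. -/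
theorem halphen_b_derivative {k : Type*} [Field k] [CharZero k]
    (d : k → k)
    (hadd : ∀ a b : k, d (a + b) = d a + d b)
    (hmul : ∀ a b : k, d (a * b) = d a * b + a * d b)
    (x₁ x₂ x₃ : k) (h12 : x₁ ≠ x₂) (h13 : x₁ ≠ x₃) (h23 : x₂ ≠ x₃)
    (s : k)
    (hx₁ : d x₁ = x₁ ^ 2 + s) (hx₂ : d x₂ = x₂ ^ 2 + s) (hx₃ : d x₃ = x₃ ^ 2 + s)
    (μ : k) (hμ : d μ = 0)
    (σ : k) (hσ : σ = x₁ + x₂ + x₃)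
    (b₁ : k) (hb₁ : b₁ = μ / ((x₁ - x₂) * (x₁ - x₃))) :
    d b₁ = -((x₁ + σ) * μ / ((x₁ - x₂) * (x₁ - x₃))) :=
  halphen_b_derivative_general d hadd hmul x₁ x₂ x₃ h12 h13 s hx₁ hx₂ hx₃ μ hμ σ hσ b₁ hb₁
end
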